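/- Let G = ([n], E) be a finite connected undirected graph with conductance φ(G), and let y ∈ ℝⁿ satisfy y₁ = ⋯ = y_{⌈n/2⌉} = 0 (after relabeling so that y is sorted increasingly) and y_i ≥ 0 for all i. Then ∑_{(i,j)∈E} |y_i - y_j| ≥ φ(G) · ∑_i |y_i|. -/

import Mathlib

/-!
Let `m` be the smallest positive value of `y ≥ 0` and `T` its support, so `y = f + m • 𝟙_T` with
`f ≥ 0` supported strictly inside `T`. The two summands are comonotone, so the edge variation
splits as that of `f` plus `m |∂T|`, while `∑ y = ∑ f + m |T|`; since `|∂T| ≥ φ |T|`, induction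
on the support concludes. This is a discrete layer-cake decomposition: all sets involved lie in
the support of `y`, which has at most `n / 2` elements.
-/

open Finset

theorem exists_eq_add_indicator_of_nonneg {V : Type*} [Fintype V] [DecidableEq V]
    {y : V → ℝ} (hy : 0 ≤ y) (hne : (univ.filter (y · ≠ 0)).Nonempty) :
    ∃ c : ℝ, 0 < c ∧ ∃ f : V → ℝ, 0 ≤ f ∧ univ.filter (f · ≠ 0) ⊂ univ.filter (y · ≠ 0) ∧
      y = f + fun i => if i ∈ univ.filter (y · ≠ 0) then c else 0 := by
  set T := univ.filter (y · ≠ 0)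
  obtain ⟨i₀, hi₀T, hi₀⟩ := exists_mem_eq_inf' hne y
  have hle : ∀ i ∈ T, T.inf' hne y ≤ y i := fun i hi => inf'_le y hi
  have hi₀ne : y i₀ ≠ 0 := (mem_filter.1 hi₀T).2
  refine ⟨T.inf' hne y, hi₀ ▸ (hy i₀).lt_of_ne' hi₀ne,
    fun i => y i - if i ∈ T then T.inf' hne y else 0, fun i => ?_, ?_, by ext; simp⟩
  · by_cases hi : i ∈ T
    · simpa [hi] using hle i hi
    · simpa [hi] using hy i
  · refine ssubset_iff_of_subset (fun i hi => ?_) |>.2 ⟨i₀, hi₀T, by simp [hi₀T, hi₀]⟩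
    by_contra hiT
    simp only [mem_filter, if_neg hiT, sub_zero] at hi
    exact hiT (mem_filter.2 hi)

namespace SimpleGraph

variable {V : Type*} [Fintype V] (G : SimpleGraph V) [DecidableRel G.Adj]

def edgeVariation (y : V → ℝ) : ℝ :=
  ∑ i, ∑ j, if G.Adj i j then |y i - y j| else 0

def cutSize [DecidableEq V] (S : Finset V) : ℝ :=
  ∑ i ∈ S, ∑ j ∈ Sᶜ, if G.Adj i j then 1 else 0

theorem edgeVariation_add {f g : V → ℝ} (h : ∀ i j, 0 ≤ (f i - f j) * (g i - g j)) :
    G.edgeVariation (f + g) = G.edgeVariation f + G.edgeVariation g := by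
  simp only [edgeVariation, ← sum_add_distrib]
  refine sum_congr rfl fun i _ => sum_congr rfl fun j _ => ?_
  split_ifs
  · rw [Pi.add_apply, Pi.add_apply, add_sub_add_comm,
      (abs_add_eq_add_abs_iff _ _).2 (mul_nonneg_iff.1 (h i j))]
  · simp

theorem edgeVariation_indicator [DecidableEq V] (S : Finset V) {c : ℝ} (hc : 0 ≤ c) :
    G.edgeVariation (fun i => if i ∈ S then c else 0) = 2 * c * G.cutSize S := by
  set a : V → V → ℝ := fun i j =>
    if i ∈ S then if j ∈ Sᶜ then (if G.Adj i j then 1 else 0) else 0 else 0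
  have hterm : ∀ i j, (if G.Adj i j then |(if i ∈ S then c else 0) - (if j ∈ S then c else 0)|
      else 0) = c * (a i j + a j i) := by
    intro i j
    by_cases hi : i ∈ S <;> by_cases hj : j ∈ S <;> by_cases hij : G.Adj i j <;>
      simp [a, hi, hj, hij, G.adj_comm j i, abs_of_nonneg hc]
  have hcut : ∑ i, ∑ j, a i j = G.cutSize S := by
    simp only [a, sum_ite_irrel, sum_const_zero, sum_ite_mem, univ_inter, cutSize]
  simp only [edgeVariation, hterm, ← mul_sum, sum_add_distrib]
  rw [sum_comm (f := fun i j => a j i), hcut]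
  ring

theorem edgeVariation_add_indicator [DecidableEq V] {f : V → ℝ} {S : Finset V} {c : ℝ}
    (hf : 0 ≤ f) (hfS : ∀ i ∉ S, f i = 0) (hc : 0 ≤ c) :
    G.edgeVariation (f + fun i => if i ∈ S then c else 0) =
      G.edgeVariation f + 2 * c * G.cutSize S := by
  rw [edgeVariation_add, edgeVariation_indicator G S hc]
  intro i j
  by_cases hi : i ∈ S <;> by_cases hj : j ∈ S
  · simp [hi, hj]
  · simpa [hi, hj, hfS j hj] using mul_nonneg (hf i) hc
  · simpa [hi, hj, hfS i hi] using mul_nonneg (hf j) hc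
  · simp [hi, hj]

theorem mul_sum_le_edgeVariation_div_two [DecidableEq V] (Φ : ℝ) {y : V → ℝ} (hy : 0 ≤ y)
    (hcut : ∀ S ⊆ univ.filter (y · ≠ 0), S.Nonempty → Φ * #S ≤ G.cutSize S) :
    Φ * ∑ i, y i ≤ G.edgeVariation y / 2 := by
  obtain ⟨T, hT⟩ : ∃ T, univ.filter (y · ≠ 0) = T := ⟨_, rfl⟩
  induction T using Finset.strongInduction generalizing y with
  | H T ih =>
  rcases T.eq_empty_or_nonempty with rfl | hTne
  · have hy0 : y = 0 :=
      funext fun i => by_contra fun hi => notMem_empty i (hT ▸ mem_filter.2 ⟨mem_univ i, hi⟩)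
    simp [hy0, edgeVariation]
  obtain ⟨c, hc, f, hf, hfT, hyf⟩ := exists_eq_add_indicator_of_nonneg hy (hT ▸ hTne)
  rw [hT] at hfT hyf hcut
  subst hyf
  have hfS : ∀ i ∉ T, f i = 0 := fun i hi => by
    by_contra hfi
    exact hi (hfT.subset (mem_filter.2 ⟨mem_univ i, hfi⟩))
  have ihf := ih _ hfT hf (fun S hS => hcut S (hS.trans hfT.subset)) rfl
  have hcutT := mul_le_mul_of_nonneg_left (hcut T subset_rfl hTne) hc.le
  rw [G.edgeVariation_add_indicator hf hfS hc.le]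
  simp only [Pi.add_apply, sum_add_distrib, sum_ite_mem, univ_inter, sum_const, nsmul_eq_mul]
  linear_combination ihf + hcutT

end SimpleGraph

theorem edge_sum_ge_conductance_general (n : ℕ) (G : SimpleGraph (Fin n)) [DecidableRel G.Adj]
    (y : Fin n → ℝ) (hy : ∀ i, 0 ≤ y i)
    (hzero : (n + 1) / 2 ≤ (Finset.univ.filter fun i => y i = 0).card) :
    (1 / 2) * ∑ i, ∑ j, (if G.Adj i j then |y i - y j| else 0) ≥
      (sInf { r : ℝ | ∃ S : Finset (Fin n), S.Nonempty ∧ 2 * S.card ≤ n ∧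
          r = (∑ i ∈ S, ∑ j ∈ Sᶜ, if G.Adj i j then (1 : ℝ) else 0) / (S.card : ℝ) })
        * ∑ i, |y i| := by
  have hbdd : BddBelow { r : ℝ | ∃ S : Finset (Fin n), S.Nonempty ∧ 2 * S.card ≤ n ∧
      r = (∑ i ∈ S, ∑ j ∈ Sᶜ, if G.Adj i j then (1 : ℝ) else 0) / (S.card : ℝ) } := by
    refine ⟨0, ?_⟩
    rintro _ ⟨S, -, -, rfl⟩
    positivity
  have hsupp : 2 * #(univ.filter (y · ≠ 0)) ≤ n := by
    have := card_filter_add_card_filter_not (s := univ) (fun i => y i = 0)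
    simp only [card_univ, Fintype.card_fin, ← ne_eq] at this
    omega
  have key := G.mul_sum_le_edgeVariation_div_two _ hy fun S hS hne =>
    (le_div_iff₀ (Nat.cast_pos.2 hne.card_pos)).1 <|
      csInf_le hbdd ⟨S, hne, (Nat.mul_le_mul_left 2 (card_le_card hS)).trans hsupp, rfl⟩
  simp only [abs_of_nonneg (hy _)]
  rw [SimpleGraph.edgeVariation] at key
  linarith

/-- For a nonnegative vector vanishing on at least half of the coordinates, the sum of
edge differences dominates the conductance times the ℓ₁ norm. -/
theorem edge_sum_ge_conductance (n : ℕ) (G : SimpleGraph (Fin n)) [DecidableRel G.Adj]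
    (hconn : G.Connected) (y : Fin n → ℝ) (hy : ∀ i, 0 ≤ y i)
    (hzero : (n + 1) / 2 ≤ (Finset.univ.filter fun i => y i = 0).card) :
    (1 / 2) * ∑ i, ∑ j, (if G.Adj i j then |y i - y j| else 0) ≥
      (sInf { r : ℝ | ∃ S : Finset (Fin n), S.Nonempty ∧ 2 * S.card ≤ n ∧
          r = (∑ i ∈ S, ∑ j ∈ Sᶜ, if G.Adj i j then (1 : ℝ) else 0) / (S.card : ℝ) })
        * ∑ i, |y i| :=
  edge_sum_ge_conductance_general n G y hy hzero
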